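/- There exists a universal constant c > 0 such that for all integers n ≥ 2, r ≥ 1 and s ≥ 1, there exists a deterministic adaptive membership-query algorithm with query budget ⌈c·(s·N((s−1, r); sr) + r·s·log₂ n)⌉ that exactly learns the class of all s-term r-MDNF functions on {0,1}^n, where N((p,q); m) is the minimum cardinality of a (p,q)-cover for a set of size m. -/

import Mathlib

/-- The transcript of a deterministic adaptive membership-query algorithm with query map `σ`
run on target `f` for `m` queries: the list `(b₁, …, b_m)` with `b_i = f (σ (b₁, …, b_{i-1}))`. -/
def transcript {n : ℕ} (σ : List Bool → (Fin n → Bool)) (f : (Fin n → Bool) → Bool) :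
    ℕ → List Bool
  | 0 => []
  | m + 1 => transcript σ f m ++ [f (σ (transcript σ f m))]

/-- `f : {0,1}^n → {0,1}` is an `s`-term `r`-MDNF if there are `p ≤ s` nonempty subsets
`T₁, …, T_p` of the coordinates, each of size at most `r`, such that `f a = 1` iff
for some `i` all coordinates of `a` indexed by `T i` equal `1`. -/
def IsMDNF (n s r : ℕ) (f : (Fin n → Bool) → Bool) : Prop :=
  ∃ (p : ℕ) (T : Fin p → Finset (Fin n)), p ≤ s ∧
    (∀ i, (T i).Nonempty ∧ (T i).card ≤ r) ∧
    ∀ a : Fin n → Bool, f a = true ↔ ∃ i, ∀ j ∈ T i, a j = true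

/-- `A` is a `(p, q)`-cover for the set `V` of coordinates: for every pair of disjoint
subsets `J, K ⊆ V` with `|J| ≤ p` and `|K| ≤ q` there is `a ∈ A` that is `0` on `J`
and `1` on `K`. -/
def IsCoverOn {n : ℕ} (V : Finset (Fin n)) (p q : ℕ) (A : Finset (Fin n → Bool)) : Prop :=
  ∀ J K : Finset (Fin n), J ⊆ V → K ⊆ V → Disjoint J K → J.card ≤ p → K.card ≤ q →
    ∃ a ∈ A, (∀ j ∈ J, a j = false) ∧ (∀ j ∈ K, a j = true)

/-- `N((p, q); m)`: the minimum cardinality of a `(p, q)`-cover for a set of size `m`. -/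
noncomputable def coverNum (p q m : ℕ) : ℕ :=
  sInf {k : ℕ | ∃ A : Finset (Fin m → Bool),
    IsCoverOn (Finset.univ : Finset (Fin m)) p q A ∧ A.card = k}

/-!
A monotone Boolean function is the upper closure of its minimal true points, and an `s`-term
`r`-MDNF has at most `s` of them, each with at most `r` ones. The learner keeps a set `𝒯` of
minimal true points found so far. While some minimal point `B` is missing, a `(s - 1, r)`-cover
of the at most `s r` coordinates used by `𝒯`, padded with `1`s elsewhere, contains a point above
`B` but above no point of `𝒯` (it vanishes at one coordinate of each `y ∈ 𝒯` where `B` is `0`);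
querying the cover finds such a counterexample with `N((s - 1, r); s r)` queries. Greedy
minimisation turns it into a new minimal true point, finding each of its at most `r` essential
coordinates by binary search with `O(log n)` queries. An adaptive algorithm is a decision tree,
and its depth is the query budget.
-/

inductive DecisionTree (Q α : Type*) where
  | leaf (a : α)
  | node (q : Q) (no yes : DecisionTree Q α)

namespace DecisionTree

universe u

variable {Q : Type*} {α β : Type u}

def eval (ans : Q → Bool) : DecisionTree Q α → α
  | leaf a => a
  | node q t₀ t₁ => if ans q then t₁.eval ans else t₀.eval ans

def depth : DecisionTree Q α → ℕ
  | leaf _ => 0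
  | node _ t₀ t₁ => max t₀.depth t₁.depth + 1

def bind : DecisionTree Q α → (α → DecisionTree Q β) → DecisionTree Q β
  | leaf a, k => k a
  | node q t₀ t₁, k => node q (t₀.bind k) (t₁.bind k)

instance : Monad (DecisionTree Q) where
  pure := leaf
  bind := bind

@[simp]
theorem eval_pure (ans : Q → Bool) (a : α) : (pure a : DecisionTree Q α).eval ans = a := rfl

@[simp]
theorem eval_bind (ans : Q → Bool) (t : DecisionTree Q α) (k : α → DecisionTree Q β) :
    (t >>= k).eval ans = (k (t.eval ans)).eval ans := by
  induction t with
  | leaf a => rfl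
  | node q t₀ t₁ ih₀ ih₁ =>
    change (node q (t₀ >>= k) (t₁ >>= k)).eval ans = _
    cases h : ans q <;> simp [eval, h, ih₀, ih₁]

@[simp]
theorem depth_pure (a : α) : (pure a : DecisionTree Q α).depth = 0 := rfl

theorem depth_bind_le {t : DecisionTree Q α} {k : α → DecisionTree Q β} {a b : ℕ}
    (ht : t.depth ≤ a) (hk : ∀ x, (k x).depth ≤ b) : (t >>= k).depth ≤ a + b := by
  induction t generalizing a with
  | leaf x => exact (hk x).trans (Nat.le_add_left b a)
  | node q t₀ t₁ ih₀ ih₁ =>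
    change max (t₀ >>= k).depth (t₁ >>= k).depth + 1 ≤ a + b
    simp only [depth, Nat.add_one_le_iff, max_lt_iff] at ht
    have := ih₀ (Nat.le_sub_one_of_lt ht.1)
    have := ih₁ (Nat.le_sub_one_of_lt ht.2)
    omega

def step : DecisionTree Q α → Bool → DecisionTree Q α
  | leaf a, _ => leaf a
  | node _ t₀ t₁, b => if b then t₁ else t₀

def query [Inhabited Q] : DecisionTree Q α → Q
  | leaf _ => default
  | node q _ _ => q

theorem eval_step [Inhabited Q] (ans : Q → Bool) (t : DecisionTree Q α) :
    (t.step (ans t.query)).eval ans = t.eval ans := by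
  cases t with
  | leaf a => rfl
  | node q t₀ t₁ => cases h : ans q <;> simp [step, query, eval, h]

theorem depth_step_le (t : DecisionTree Q α) (b : Bool) : (t.step b).depth ≤ t.depth - 1 := by
  cases t with
  | leaf a => rfl
  | node q t₀ t₁ => cases b <;> simp [step, depth]

theorem eval_eq_of_depth_eq_zero {t : DecisionTree Q α} (ht : t.depth = 0) (ans ans' : Q → Bool) :
    t.eval ans = t.eval ans' := by
  cases t with
  | leaf a => rfl
  | node q t₀ t₁ => simp [depth] at ht

def findTrue : List Q → DecisionTree Q (Option Q)
  | [] => pure none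
  | x :: l => node x (findTrue l) (pure (some x))

@[simp]
theorem eval_findTrue (ans : Q → Bool) (l : List Q) : (findTrue l).eval ans = l.find? ans := by
  induction l with
  | nil => rfl
  | cons x l ih => cases h : ans x <;> simp [findTrue, eval, h, ih]

theorem depth_findTrue_le (l : List Q) : (findTrue l).depth ≤ l.length := by
  induction l with
  | nil => exact le_rfl
  | cons x l ih => simpa [findTrue, depth] using ih

def binarySearch (q : ℕ → Q) (lo hi : ℕ) : DecisionTree Q ℕ :=
  if lo + 1 < hi then
    node (q ((lo + hi) / 2)) (binarySearch q ((lo + hi) / 2) hi) (binarySearch q lo ((lo + hi) / 2))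
  else pure lo
termination_by hi - lo

theorem eval_binarySearch (ans : Q → Bool) (q : ℕ → Q) {lo hi : ℕ} (hlt : lo < hi)
    (hlo : ans (q lo) = false) (hhi : ans (q hi) = true) :
    let i := (binarySearch q lo hi).eval ans
    lo ≤ i ∧ i < hi ∧ ans (q i) = false ∧ ans (q (i + 1)) = true := by
  induction lo, hi using binarySearch.induct with
  | case1 lo hi hmid ih₁ ih₂ =>
    rw [binarySearch, if_pos hmid]
    cases h : ans (q ((lo + hi) / 2)) with
    | false =>
      obtain ⟨h₁, h₂, h₃⟩ := ih₁ (by omega) h hhi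
      simp only [eval, h, Bool.false_eq_true, if_false]
      exact ⟨by omega, h₂, h₃⟩
    | true =>
      obtain ⟨h₁, h₂, h₃⟩ := ih₂ (by omega) hlo h
      simp only [eval, h, if_true]
      exact ⟨h₁, by omega, h₃⟩
  | case2 lo hi hmid =>
    rw [binarySearch, if_neg hmid]
    have : lo + 1 = hi := by omega
    exact ⟨le_rfl, hlt, hlo, this ▸ hhi⟩

theorem depth_binarySearch_le (q : ℕ → Q) (lo hi : ℕ) :
    (binarySearch q lo hi).depth ≤ Nat.clog 2 (hi - lo) := by
  induction lo, hi using binarySearch.induct with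
  | case1 lo hi hmid ih₁ ih₂ =>
    rw [binarySearch, if_pos hmid, depth, Nat.clog_of_two_le one_lt_two (by omega)]
    have h₁ := ih₁.trans (Nat.clog_mono_right 2 (n := hi - (lo + hi) / 2)
      (m := (hi - lo + 2 - 1) / 2) (by omega))
    have h₂ := ih₂.trans (Nat.clog_mono_right 2 (n := (lo + hi) / 2 - lo)
      (m := (hi - lo + 2 - 1) / 2) (by omega))
    omega
  | case2 lo hi hmid =>
    rw [binarySearch, if_neg hmid]
    exact Nat.zero_le _

variable {n : ℕ}

theorem eval_foldl_step_transcript (t : DecisionTree (Fin n → Bool) α) (f : (Fin n → Bool) → Bool)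
    (m : ℕ) :
    ((transcript (fun l => (l.foldl step t).query) f m).foldl step t).eval f = t.eval f ∧
      ((transcript (fun l => (l.foldl step t).query) f m).foldl step t).depth ≤ t.depth - m := by
  induction m with
  | zero => exact ⟨rfl, le_rfl⟩
  | succ m ih =>
    simp only [transcript, List.foldl_append, List.foldl_cons, List.foldl_nil]
    refine ⟨(eval_step f _).trans ih.1, (depth_step_le _ _).trans ?_⟩
    omega

theorem exists_algorithm_of_depth_le (t : DecisionTree (Fin n → Bool) α) {m : ℕ}
    (hm : t.depth ≤ m) :
    ∃ (σ : List Bool → (Fin n → Bool)) (out : List Bool → α),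
      ∀ f, out (transcript σ f m) = t.eval f := by
  -- after `m ≥ t.depth` answers the subtree reached is a leaf, whose value any answers read off
  refine ⟨fun l => (l.foldl step t).query, fun l => (l.foldl step t).eval fun _ => false,
    fun f => ?_⟩
  obtain ⟨heval, hdepth⟩ := eval_foldl_step_transcript t f m
  exact (eval_eq_of_depth_eq_zero (by omega) _ _).trans heval

end DecisionTree

open Finset

section Minimals

variable {α : Type*} [PartialOrder α] [Fintype α]

open Classical in
noncomputable def trueMinimals (f : α → Bool) : Finset α := univ.filter (Minimal (f · = true))

@[simp]
theorem mem_trueMinimals {f : α → Bool} {x : α} : x ∈ trueMinimals f ↔ Minimal (f · = true) x := by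
  simp [trueMinimals]

theorem exists_mem_trueMinimals_le {f : α → Bool} {x : α} (hx : f x = true) :
    ∃ m ∈ trueMinimals f, m ≤ x := by
  obtain ⟨m, hmx, hm⟩ := exists_minimal_le_of_wellFoundedLT (f · = true) x hx
  exact ⟨m, mem_trueMinimals.2 hm, hmx⟩

theorem mem_upperClosure_trueMinimals {f : α → Bool} (hf : Monotone f) {x : α} :
    x ∈ upperClosure (trueMinimals f : Set α) ↔ f x = true := by
  refine ⟨fun ⟨m, hm, hmx⟩ => ?_, fun hx => exists_mem_trueMinimals_le hx⟩
  exact Bool.le_iff_imp.1 (hf hmx) (mem_trueMinimals.1 hm).prop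

theorem not_le_of_mem_trueMinimals {f : α → Bool} {x y : α} (hx : x ∈ trueMinimals f)
    (hy : y ∈ trueMinimals f) (hxy : x ≠ y) : ¬ x ≤ y :=
  fun h => hxy ((mem_trueMinimals.1 hy).eq_of_le (mem_trueMinimals.1 hx).prop h)

end Minimals

variable {n : ℕ}

def ones (x : Fin n → Bool) : Finset (Fin n) := univ.filter (x · = true)

@[simp]
theorem mem_ones {x : Fin n → Bool} {j : Fin n} : j ∈ ones x ↔ x j = true := by
  simp [ones]

theorem IsMDNF.monotone {s r : ℕ} {f : (Fin n → Bool) → Bool} (hf : IsMDNF n s r f) :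
    Monotone f := by
  obtain ⟨p, T, -, -, hT⟩ := hf
  refine fun x y hxy => Bool.le_iff_imp.2 fun hx => (hT y).2 ?_
  obtain ⟨i, hi⟩ := (hT x).1 hx
  exact ⟨i, fun j hj => Bool.le_iff_imp.1 (hxy j) (hi j hj)⟩

/-- Every minimal true point of an MDNF is the indicator of one of its terms. -/
theorem IsMDNF.exists_superset_trueMinimals {s r : ℕ} {f : (Fin n → Bool) → Bool}
    (hf : IsMDNF n s r f) :
    ∃ 𝒮 : Finset (Fin n → Bool), 𝒮.card ≤ s ∧ (∀ m ∈ 𝒮, (ones m).card ≤ r) ∧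
      trueMinimals f ⊆ 𝒮 := by
  obtain ⟨p, T, hp, hTr, hT⟩ := hf
  let χ : Fin p → Fin n → Bool := fun i j => decide (j ∈ T i)
  refine ⟨univ.image χ, card_image_le.trans (by simpa using hp), ?_, fun m hm => ?_⟩
  · simp only [mem_image, mem_univ, true_and, forall_exists_index, forall_apply_eq_imp_iff]
    intro i
    convert (hTr i).2
    ext j
    simp [χ]
  · have hm := mem_trueMinimals.1 hm
    obtain ⟨i, hi⟩ := (hT m).1 hm.prop
    have hχm : χ i ≤ m := fun j => Bool.le_iff_imp.2 fun hj => hi j (by simpa [χ] using hj)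
    have hχ : f (χ i) = true := (hT _).2 ⟨i, fun j hj => by simpa [χ] using hj⟩
    exact mem_image.2 ⟨i, mem_univ _, hm.eq_of_le hχ hχm⟩

section Cover

variable {m p q : ℕ}

def liftPoint (V : Finset (Fin n)) (e : V ↪ Fin m) (a : Fin m → Bool) : Fin n → Bool :=
  fun j => if h : j ∈ V then a (e ⟨j, h⟩) else true

theorem IsCoverOn.image_liftPoint {A : Finset (Fin m → Bool)} (hA : IsCoverOn univ p q A)
    (V : Finset (Fin n)) (e : V ↪ Fin m) : IsCoverOn V p q (A.image (liftPoint V e)) := by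
  intro J K hJ hK hJK hJp hKq
  obtain ⟨a, ha, haJ, haK⟩ := hA ((J.subtype (· ∈ V)).map e) ((K.subtype (· ∈ V)).map e)
    (subset_univ _) (subset_univ _)
    ((disjoint_map e).2 <| disjoint_left.2 fun x hxJ hxK =>
      disjoint_left.1 hJK (mem_subtype.1 hxJ) (mem_subtype.1 hxK))
    ((card_map _).trans_le <| (card_subtype _ _).trans_le <| (card_filter_le _ _).trans hJp)
    ((card_map _).trans_le <| (card_subtype _ _).trans_le <| (card_filter_le _ _).trans hKq)
  refine ⟨liftPoint V e a, mem_image_of_mem _ ha, fun j hj => ?_, fun j hj => ?_⟩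
  · simpa [liftPoint, hJ hj] using haJ (e ⟨j, hJ hj⟩) (mem_map_of_mem _ (by simpa using hj))
  · simpa [liftPoint, hK hj] using haK (e ⟨j, hK hj⟩) (mem_map_of_mem _ (by simpa using hj))

theorem exists_isCoverOn_card_eq_coverNum (p q m : ℕ) : ∃ A : Finset (Fin m → Bool),
    IsCoverOn univ p q A ∧ A.card = coverNum p q m := by
  refine Nat.sInf_mem (s := {k | ∃ A : Finset (Fin m → Bool), IsCoverOn univ p q A ∧ A.card = k})
    ⟨_, univ, fun J K _ _ hJK _ _ => ?_, rfl⟩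
  refine ⟨fun j => decide (j ∈ K), mem_univ _, fun j hj => ?_, fun j hj => by simpa using hj⟩
  simpa using disjoint_left.1 hJK hj

/-- Empty when `V` has more than `m` elements. -/
noncomputable def coverOn (p q m : ℕ) (V : Finset (Fin n)) : Finset (Fin n → Bool) :=
  if h : V.card ≤ m then
    (exists_isCoverOn_card_eq_coverNum p q m).choose.image
      (liftPoint V (V.equivFin.toEmbedding.trans (Fin.castLEEmb h)))
  else ∅

theorem card_coverOn_le (V : Finset (Fin n)) : (coverOn p q m V).card ≤ coverNum p q m := by
  unfold coverOn
  split_ifs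
  · exact card_image_le.trans (exists_isCoverOn_card_eq_coverNum p q m).choose_spec.2.le
  · exact Nat.zero_le _

theorem isCoverOn_coverOn {V : Finset (Fin n)} (hV : V.card ≤ m) :
    IsCoverOn V p q (coverOn p q m V) := by
  rw [coverOn, dif_pos hV]
  exact (exists_isCoverOn_card_eq_coverNum p q m).choose_spec.1.image_liftPoint V _

theorem coverOn_apply_of_notMem {V : Finset (Fin n)} {a : Fin n → Bool}
    (ha : a ∈ coverOn p q m V) {j : Fin n} (hj : j ∉ V) : a j = true := by
  unfold coverOn at ha
  split_ifs at ha
  · obtain ⟨b, -, rfl⟩ := mem_image.1 ha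
    simp [liftPoint, hj]
  · simp at ha

theorem IsCoverOn.exists_le_forall_not_le {V : Finset (Fin n)} {A : Finset (Fin n → Bool)}
    (hA : IsCoverOn V p q A) (hA₁ : ∀ a ∈ A, ∀ j ∉ V, a j = true)
    {𝒯 : Finset (Fin n → Bool)} (h𝒯V : ∀ y ∈ 𝒯, ones y ⊆ V) (h𝒯 : 𝒯.card ≤ p)
    {B : Fin n → Bool} (hB : (ones B).card ≤ q) (hB𝒯 : ∀ y ∈ 𝒯, ¬ y ≤ B) :
    ∃ a ∈ A, B ≤ a ∧ ∀ y ∈ 𝒯, ¬ y ≤ a := by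
  have hw : ∀ y ∈ 𝒯, ∃ j, y j = true ∧ B j = false := fun y hy => by
    obtain ⟨j, hj⟩ := by simpa [Pi.le_def] using hB𝒯 y hy
    exact ⟨j, (Bool.lt_iff.1 hj).symm⟩
  choose w hwy hwB using hw
  classical
  obtain ⟨a, ha, haJ, haK⟩ := hA (𝒯.attach.image fun y : 𝒯 => w y.1 y.2) (V ∩ ones B)
    (image_subset_iff.2 fun y _ => h𝒯V y y.2 (mem_ones.2 (hwy y y.2))) inter_subset_left
    (disjoint_left.2 fun j hj hjB => by
      obtain ⟨y, -, rfl⟩ := mem_image.1 hj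
      simp [hwB y y.2] at hjB)
    ((card_image_le.trans card_attach.le).trans h𝒯)
    ((card_le_card inter_subset_right).trans hB)
  refine ⟨a, ha, fun j => Bool.le_iff_imp.2 fun hj => ?_, fun y hy hya => ?_⟩
  · by_cases hjV : j ∈ V
    · exact haK j (mem_inter.2 ⟨hjV, mem_ones.2 hj⟩)
    · exact hA₁ a ha j hjV
  · have := Bool.le_iff_imp.1 (hya (w y hy)) (hwy y hy)
    simp [haJ (w y hy) (mem_image_of_mem _ (mem_attach _ ⟨y, hy⟩))] at this

end Cover

section Minimize

open Function DecisionTree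

variable {f : (Fin n → Bool) → Bool} {y : Fin n → Bool} {b : ℕ}

def clearIco (y : Fin n → Bool) (i b : ℕ) : Fin n → Bool := fun j => y j && ((j : ℕ) < i || b ≤ j)

theorem clearIco_le (y : Fin n → Bool) (i b : ℕ) : clearIco y i b ≤ y :=
  fun j => Bool.le_iff_imp.2 fun h => by simp_all [clearIco]

theorem clearIco_eq_self {i : ℕ} (h : b ≤ i ∨ n ≤ i) : clearIco y i b = y := by
  funext j
  have : (j : ℕ) < i ∨ b ≤ j := by omega
  simp [clearIco, this]

def EssentialFrom (f : (Fin n → Bool) → Bool) (y : Fin n → Bool) (b : ℕ) : Prop :=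
  ∀ j : Fin n, b ≤ j → y j = true → f (update y j false) = false

theorem EssentialFrom.eq_false_of_le {z : Fin n → Bool} (hy : EssentialFrom f y b)
    (hf : Monotone f) {j : Fin n} (hj : b ≤ j) (hyj : y j = true) (hzy : z ≤ y)
    (hzj : z j = false) :
    f z = false := by
  refine Bool.eq_false_iff.2 fun hz => ?_
  have := Bool.le_iff_imp.1 (hf (le_update_iff.2 ⟨hzj.le, fun k _ => hzy k⟩)) (by simpa using hz)
  simp [hy j hj hyj] at this

theorem EssentialFrom.minimal_clearIco_zero (hf : Monotone f) (hy : EssentialFrom f y b)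
    (htrue : f (clearIco y 0 b) = true) : Minimal (f · = true) (clearIco y 0 b) := by
  refine ⟨htrue, fun z hz hzy j => Bool.le_iff_imp.2 fun hj => ?_⟩
  simp only [clearIco, Nat.not_lt_zero, decide_false, Bool.false_or, Bool.and_eq_true,
    decide_eq_true_eq] at hj
  by_contra hzj
  simp [hy.eq_false_of_le hf hj.2 hj.1 (hzy.trans (clearIco_le y 0 b)) (by simpa using hzj)] at hz

theorem EssentialFrom.ones_clearIco_zero_subset (hf : Monotone f) (hy : EssentialFrom f y b)
    {m : Fin n → Bool} (hm : f m = true) (hmy : m ≤ y) : ones (clearIco y 0 b) ⊆ ones m := by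
  intro j hj
  simp only [mem_ones, clearIco, Nat.not_lt_zero, decide_false, Bool.false_or,
    Bool.and_eq_true, decide_eq_true_eq] at hj
  by_contra hmj
  simp [hy.eq_false_of_le hf hj.2 hj.1 hmy (by simpa using hmj)] at hm

theorem EssentialFrom.clearIco_succ (hf : Monotone f) (hy : EssentialFrom f y b) {i : ℕ}
    (hin : i < n) (hi : f (clearIco y i b) = false) (hi₁ : f (clearIco y (i + 1) b) = true) :
    EssentialFrom f (clearIco y (i + 1) b) i ∧
      ones (clearIco y 0 b) ⊂ ones (clearIco (clearIco y (i + 1) b) 0 i) := by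
  have hib : i < b := by
    by_contra! h
    rw [clearIco_eq_self (.inl h)] at hi
    rw [clearIco_eq_self (.inl (by omega))] at hi₁
    simp [hi] at hi₁
  set y' := clearIco y (i + 1) b
  have hupdate : update y' ⟨i, hin⟩ false = clearIco y i b := by
    funext j
    by_cases hj : j = ⟨i, hin⟩
    · subst hj
      simp [clearIco, hib]
    · have : (j : ℕ) ≠ i := fun h => hj (Fin.ext h)
      simp only [update_of_ne hj, y', clearIco]
      congr 2
      simp only [decide_eq_decide]
      omega
  have hy'i : y' ⟨i, hin⟩ = true := by
    by_contra h
    rw [← hupdate, update_eq_self_iff.2 (by simpa using h)] at hi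
    simp [hi] at hi₁
  refine ⟨fun j hj hy'j => ?_, ssubset_iff_of_subset (fun j hj => ?_) |>.2 ⟨⟨i, hin⟩, ?_, ?_⟩⟩
  · rcases eq_or_ne j ⟨i, hin⟩ with rfl | hne
    · rwa [hupdate]
    · have hjb : b ≤ j := by
        have : i ≠ j := fun h => hne (Fin.ext h.symm)
        simp only [y', clearIco, Bool.and_eq_true, Bool.or_eq_true, decide_eq_true_eq] at hy'j
        omega
      have hyj : y j = true := clearIco_le y _ b j |> Bool.le_iff_imp.1 <| hy'j
      exact hy.eq_false_of_le hf hjb hyj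
        ((update_le_self_iff.2 bot_le).trans (clearIco_le y _ b)) (by simp)
  · simp only [mem_ones, clearIco, Nat.not_lt_zero, decide_false, Bool.false_or,
      Bool.and_eq_true, decide_eq_true_eq, y'] at hj ⊢
    exact ⟨⟨hj.1, by simp [hj.2]⟩, by omega⟩
  · simpa [y', clearIco] using hy'i
  · simp [clearIco, hib]

/-- `clearIco y 0 b` keeps only the essential `1`s found so far; when it is not yet true, binary
search on `i ↦ clearIco y i b` locates the next essential coordinate below `b`. -/
def minimize : ℕ → (Fin n → Bool) → ℕ → DecisionTree (Fin n → Bool) (Fin n → Bool)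
  | 0, y, b => pure (clearIco y 0 b)
  | k + 1, y, b => node (clearIco y 0 b)
      (binarySearch (clearIco y · b) 0 n >>= fun i => minimize k (clearIco y (i + 1) b) i)
      (pure (clearIco y 0 b))

theorem eval_minimize (hf : Monotone f) {r : ℕ} (hr : ∀ m ∈ trueMinimals f, (ones m).card ≤ r)
    (k : ℕ) (hy : f y = true) (hess : EssentialFrom f y b)
    (hk : r < k + (ones (clearIco y 0 b)).card) :
    (minimize k y b).eval f ∈ trueMinimals f ∧ (minimize k y b).eval f ≤ y := by
  induction k generalizing y b with
  | zero =>
    obtain ⟨m, hm, hmy⟩ := exists_mem_trueMinimals_le hy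
    have := (card_le_card (hess.ones_clearIco_zero_subset hf (mem_trueMinimals.1 hm).prop
      hmy)).trans (hr m hm)
    omega
  | succ k ih =>
    cases hq : f (clearIco y 0 b) with
    | true =>
      simp only [minimize, DecisionTree.eval, hq, if_true, eval_pure]
      exact ⟨mem_trueMinimals.2 (hess.minimal_clearIco_zero hf hq), clearIco_le y 0 b⟩
    | false =>
      have hn : 0 < n := by
        by_contra! h
        rw [clearIco_eq_self (.inr h)] at hq
        simp [hq] at hy
      obtain ⟨-, hin, hi, hi₁⟩ := eval_binarySearch f (clearIco y · b) hn hq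
        (by rwa [clearIco_eq_self (.inr le_rfl)])
      obtain ⟨hess', hlt⟩ := hess.clearIco_succ hf hin hi hi₁
      simp only [minimize, DecisionTree.eval, hq, Bool.false_eq_true, if_false, eval_bind]
      obtain ⟨hmin, hle⟩ := ih hi₁ hess' (by have := card_lt_card hlt; omega)
      exact ⟨hmin, hle.trans (clearIco_le y _ b)⟩

theorem depth_minimize_le (k : ℕ) (y : Fin n → Bool) (b : ℕ) :
    (minimize k y b).depth ≤ k * (Nat.clog 2 n + 1) := by
  induction k generalizing y b with
  | zero => simp [minimize]
  | succ k ih =>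
    have hsearch : (binarySearch (clearIco y · b) 0 n).depth ≤ Nat.clog 2 n := by
      simpa using depth_binarySearch_le (clearIco y · b) 0 n
    have := depth_bind_le hsearch fun i => ih (clearIco y (i + 1) b) i
    simp only [minimize, depth, depth_pure]
    rw [Nat.succ_mul]
    omega

end Minimize

open Classical in
noncomputable def upperIndicator {α : Type*} [Preorder α] (𝒯 : Finset α) (x : α) : Bool :=
  decide (x ∈ upperClosure (𝒯 : Set α))

theorem upperIndicator_trueMinimals {α : Type*} [PartialOrder α] [Fintype α] {f : α → Bool}
    (hf : Monotone f) : upperIndicator (trueMinimals f) = f := by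
  funext x
  classical
  rw [upperIndicator, Bool.eq_iff_iff, decide_eq_true_iff]
  exact mem_upperClosure_trueMinimals hf

section Learner

open DecisionTree

variable (s r : ℕ) {f : (Fin n → Bool) → Bool}

noncomputable def candidates (𝒯 : Finset (Fin n → Bool)) : List (Fin n → Bool) :=
  (coverOn (s - 1) r (s * r) (𝒯.biUnion ones)).toList.filter fun a => !upperIndicator 𝒯 a

noncomputable def learnMinimals :
    ℕ → Finset (Fin n → Bool) → DecisionTree (Fin n → Bool) (Finset (Fin n → Bool))
  | 0, 𝒯 => pure 𝒯
  | k + 1, 𝒯 => findTrue (candidates s r 𝒯) >>= fun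
    | none => pure 𝒯
    | some x => minimize (r + 1) x n >>= fun y => learnMinimals k (insert y 𝒯)

noncomputable def learner : DecisionTree (Fin n → Bool) ((Fin n → Bool) → Bool) :=
  learnMinimals s r s ∅ >>= fun 𝒯 => pure (upperIndicator 𝒯)

variable {s r}

theorem mem_candidates {𝒯 : Finset (Fin n → Bool)} {a : Fin n → Bool} :
    a ∈ candidates s r 𝒯 ↔
      a ∈ coverOn (s - 1) r (s * r) (𝒯.biUnion ones) ∧ a ∉ upperClosure (𝒯 : Set _) := by
  simp [candidates, upperIndicator]

theorem exists_mem_candidates_of_ssubset (hf : Monotone f) (hs : (trueMinimals f).card ≤ s)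
    (hr : ∀ m ∈ trueMinimals f, (ones m).card ≤ r) {𝒯 : Finset (Fin n → Bool)}
    (h𝒯 : 𝒯 ⊂ trueMinimals f) : ∃ a ∈ candidates s r 𝒯, f a = true := by
  obtain ⟨B, hB, hB𝒯⟩ := exists_of_ssubset h𝒯
  have h𝒯s : 𝒯.card ≤ s - 1 := by have := card_lt_card h𝒯; omega
  have hV : (𝒯.biUnion ones).card ≤ s * r :=
    (card_biUnion_le_card_mul _ _ r fun y hy => hr y (h𝒯.subset hy)).trans
      (Nat.mul_le_mul_right r (h𝒯s.trans (Nat.sub_le s 1)))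
  obtain ⟨a, ha, hBa, ha𝒯⟩ := (isCoverOn_coverOn hV).exists_le_forall_not_le
    (fun a ha j hj => coverOn_apply_of_notMem ha hj) (fun y hy => subset_biUnion_of_mem ones hy)
    h𝒯s (hr B hB) fun y hy =>
      not_le_of_mem_trueMinimals (h𝒯.subset hy) hB (by rintro rfl; exact hB𝒯 hy)
  refine ⟨a, mem_candidates.2 ⟨ha, fun ⟨y, hy, hya⟩ => ha𝒯 y hy hya⟩, ?_⟩
  exact Bool.le_iff_imp.1 (hf hBa) (mem_trueMinimals.1 hB).prop

theorem eval_learnMinimals (hf : Monotone f) (hs : (trueMinimals f).card ≤ s)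
    (hr : ∀ m ∈ trueMinimals f, (ones m).card ≤ r) (k : ℕ) {𝒯 : Finset (Fin n → Bool)}
    (h𝒯 : 𝒯 ⊆ trueMinimals f) (hk : (trueMinimals f).card ≤ 𝒯.card + k) :
    (learnMinimals s r k 𝒯).eval f = trueMinimals f := by
  induction k generalizing 𝒯 with
  | zero => exact eq_of_subset_of_card_le h𝒯 hk
  | succ k ih =>
    simp only [learnMinimals, eval_bind, eval_findTrue]
    cases hfind : (candidates s r 𝒯).find? f with
    | none =>
      refine eq_of_subset_of_card_le h𝒯 (not_lt.1 fun hlt => ?_)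
      obtain ⟨a, ha, hfa⟩ := exists_mem_candidates_of_ssubset hf hs hr
        (ssubset_of_subset_of_ne h𝒯 (by rintro rfl; exact hlt.false))
      exact List.find?_eq_none.1 hfind a ha hfa
    | some x =>
      have hx := (mem_candidates.1 (List.mem_of_find?_eq_some hfind)).2
      obtain ⟨hy, hyx⟩ := eval_minimize (b := n) hf hr (r + 1) (List.find?_some hfind)
        (fun j hj => absurd j.isLt (by omega)) (by omega)
      simp only [eval_bind]
      refine ih (insert_subset hy h𝒯) ?_
      rw [card_insert_of_notMem fun hy𝒯 => hx ⟨_, hy𝒯, hyx⟩]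
      omega

theorem depth_learnMinimals_le (k : ℕ) (𝒯 : Finset (Fin n → Bool)) :
    (learnMinimals s r k 𝒯).depth ≤
      k * (coverNum (s - 1) r (s * r) + (r + 1) * (Nat.clog 2 n + 1)) := by
  induction k generalizing 𝒯 with
  | zero => simp [learnMinimals]
  | succ k ih =>
    have hcand : (candidates s r 𝒯).length ≤ coverNum (s - 1) r (s * r) :=
      (List.length_filter_le _ _).trans ((length_toList _).trans_le (card_coverOn_le _))
    rw [learnMinimals, Nat.succ_mul, Nat.add_comm (k * _), add_assoc]
    refine depth_bind_le ((depth_findTrue_le _).trans hcand) fun o => ?_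
    cases o with
    | none => simp
    | some x => exact depth_bind_le (depth_minimize_le _ _ _) fun y => ih _

theorem eval_learner_of_monotone (hf : Monotone f) (hs : (trueMinimals f).card ≤ s)
    (hr : ∀ m ∈ trueMinimals f, (ones m).card ≤ r) : (learner s r).eval f = f := by
  rw [learner, eval_bind, eval_learnMinimals hf hs hr s (empty_subset _) (by simpa using hs),
    eval_pure, upperIndicator_trueMinimals hf]

theorem depth_learner_le : (learner s r : DecisionTree (Fin n → Bool) _).depth ≤
    s * (coverNum (s - 1) r (s * r) + (r + 1) * (Nat.clog 2 n + 1)) := by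
  rw [learner]
  exact (depth_bind_le (b := 0) (depth_learnMinimals_le s ∅) fun _ => le_rfl).trans_eq (add_zero _)

end Learner

theorem IsMDNF.eval_learner {s r : ℕ} {f : (Fin n → Bool) → Bool} (hf : IsMDNF n s r f) :
    (learner s r).eval f = f := by
  obtain ⟨𝒮, h𝒮s, h𝒮r, hsub⟩ := hf.exists_superset_trueMinimals
  exact eval_learner_of_monotone hf.monotone ((card_le_card hsub).trans h𝒮s)
    fun m hm => h𝒮r m (hsub hm)

theorem clog_add_one_le_three_mul_logb {n : ℕ} (hn : 2 ≤ n) :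
    (Nat.clog 2 n + 1 : ℝ) ≤ 3 * Real.logb 2 n := by
  have hlog : 1 ≤ Real.logb 2 n := by
    rw [Real.le_logb_iff_rpow_le one_lt_two (by positivity), Real.rpow_one]
    exact_mod_cast hn
  have hclog : (Nat.clog 2 n : ℝ) < Real.logb 2 n + 1 := by
    rw [← Real.natCeil_logb_natCast, Nat.cast_ofNat]
    exact Nat.ceil_lt_add_one (by linarith)
  linarith

theorem learner_bound_le_budget {n r s N : ℕ} (hn : 2 ≤ n) (hr : 1 ≤ r) :
    ((s * (N + (r + 1) * (Nat.clog 2 n + 1)) : ℕ) : ℝ) ≤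
      6 * ((s : ℝ) * N + (r : ℝ) * s * Real.logb 2 n) := by
  have hr' : (r + 1 : ℝ) ≤ 2 * r := by norm_cast; omega
  have := mul_le_mul hr' (clog_add_one_le_three_mul_logb hn) (by positivity) (by positivity)
  push_cast
  nlinarith [Nat.cast_nonneg (α := ℝ) s, Nat.cast_nonneg (α := ℝ) N]

/-- There is a universal constant `c > 0` such that for all `n ≥ 2`, `r ≥ 1` and `s ≥ 1`,
some deterministic adaptive membership-query algorithm with query budget
`⌈c·(s·N((s−1, r); s·r) + r·s·log₂ n)⌉` exactly learns the class of all `s`-term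
`r`-MDNF functions on `{0,1}^n`. -/
theorem deterministic_upper_bound_cover_free :
    ∃ c : ℝ, 0 < c ∧ ∀ n r s : ℕ, 2 ≤ n → 1 ≤ r → 1 ≤ s →
      ∃ (σ : List Bool → (Fin n → Bool)) (out : List Bool → ((Fin n → Bool) → Bool)),
        ∀ f : (Fin n → Bool) → Bool, IsMDNF n s r f →
          out (transcript σ f
            ⌈c * ((s : ℝ) * (coverNum (s - 1) r (s * r) : ℝ) +
              (r : ℝ) * s * Real.logb 2 n)⌉₊) = f := by
  refine ⟨6, by norm_num, fun n r s hn hr _ => ?_⟩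
  obtain ⟨σ, out, hout⟩ := DecisionTree.exists_algorithm_of_depth_le (learner s r)
    (depth_learner_le.trans (Nat.cast_le.1 ((learner_bound_le_budget hn hr).trans (Nat.le_ceil _))))
  exact ⟨σ, out, fun f hf => (hout f).trans hf.eval_learner⟩
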